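/- The infinite dihedral group D∞ (generated by s₀ and s₁ with s₀² = s₁² = 1) is isomorphic as a group to the Coxeter group associated to the 2×2 Coxeter matrix M with M(i,i)=1 and M(0,1)=M(1,0)=0 (where 0 encodes infinite order), via an isomorphism sending the two geometric reflections of D∞ to the Coxeter generators. -/

import Mathlib

open DihedralGroup CoxeterSystem

/-- The infinite dihedral group `D∞`, realized as `DihedralGroup 0`. -/
abbrev Dinf := DihedralGroup 0

/-- View an element of `ZMod 0` as an integer. -/
def toInt (k : ZMod 0) : ℤ := k

/-- The Coxeter matrix of type `A₁⁽¹⁾`: diagonal entries `1`, off-diagonal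
entries `0` (encoding infinite order). -/
def Mmat : CoxeterMatrix (Fin 2) where
  M := !![1, 0; 0, 1]
  isSymm := by decide
  diagonal := by decide
  off_diagonal := by
    intro i i' h
    fin_cases i <;> fin_cases i' <;> first | exact absurd rfl h | decide | simp_all

/-- The generator index `0` (resp. `1`) corresponds to the geometric
reflection `s₀ = sr 0` (resp. `s₁ = sr 1`). -/
def toGen : Fin 2 → Dinf := fun i => if i = 0 then sr 0 else sr 1

/-- The product in `D∞` of a word in the two generators `s₀, s₁`. -/
def wprod (w : List (Fin 2)) : Dinf := (w.map toGen).prod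

/-- The explicit reduced word (an alternating word in `s₀` and `s₁`) for an
element of `D∞`. -/
def reducedWord : Dinf → List (Fin 2)
  | .r k => if 0 ≤ toInt k then alternatingWord 0 1 (2 * (toInt k).natAbs)
      else alternatingWord 1 0 (2 * (toInt k).natAbs)
  | .sr k => if 0 < toInt k then alternatingWord 0 1 (2 * (toInt k).natAbs - 1)
      else alternatingWord 1 0 (2 * (toInt k).natAbs + 1)

/-- The degree map `φ : D∞ → ℕ²`, counting occurrences of `s₀` and of `s₁` in
a reduced word. -/
def φ (g : Dinf) : ℕ × ℕ := ((reducedWord g).count 0, (reducedWord g).count 1)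

/-- The explicit (computable) length function on `D∞`. -/
def cLength : Dinf → ℕ
  | .r k => 2 * (toInt k).natAbs
  | .sr k => if 0 < toInt k then 2 * (toInt k).natAbs - 1 else 2 * (toInt k).natAbs + 1

/-- `t` is a reflection of `D∞`, i.e. an element of the form `sr k`. -/
def IsReflectionD (t : Dinf) : Prop := ∃ k, t = sr k

/-- The moment graph of `D∞` has an edge `u → v` of degree `α` iff
`v = u * s_α` where `s_α` is the (root) reflection of degree `α`. -/
def IsEdge (u v : Dinf) (α : ℕ × ℕ) : Prop := ∃ t : Dinf, IsReflectionD t ∧ φ t = α ∧ v = u * t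

/-- Increasing chains in the moment graph of `D∞`: the Coxeter length strictly
increases along each edge, and the degree of the chain is the sum of the
degrees of its edges. -/
inductive Chain (cs : CoxeterSystem Mmat Dinf) : Dinf → Dinf → ℕ × ℕ → Prop where
  | refl (u : Dinf) : Chain cs u u 0
  | step {u v w : Dinf} {d α : ℕ × ℕ} : Chain cs u v d → IsEdge v w α →
      cs.length v < cs.length w → Chain cs u w (d + α)

/-- Bruhat order on `D∞`: `u ≤ v` iff there is an increasing chain from `u`
to `v` in the moment graph. -/
def BruhatLE (cs : CoxeterSystem Mmat Dinf) (u v : Dinf) : Prop := ∃ d, Chain cs u v d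

/-- Strict Bruhat order on `D∞`. -/
def BruhatLT (cs : CoxeterSystem Mmat Dinf) (u v : Dinf) : Prop :=
  BruhatLE cs u v ∧ u ≠ v

/-- `v` is reachable from `u` by an increasing chain of degree at most `d`. -/
def Reachable (cs : CoxeterSystem Mmat Dinf) (u : Dinf) (d : ℕ × ℕ) (v : Dinf) : Prop :=
  ∃ d', d' ≤ d ∧ Chain cs u v d'

/-- The algebraic set `A_d(u) = { v | ℓ(uv) = ℓ(u) + ℓ(v), φ(v) ≤ d }`. -/
def Ad (cs : CoxeterSystem Mmat Dinf) (u : Dinf) (d : ℕ × ℕ) : Set Dinf :=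
  { v | cs.length (u * v) = cs.length u + cs.length v ∧ φ v ≤ d }

/-- `w` is maximal in `S` with respect to the Bruhat order. -/
def IsMaximalIn (cs : CoxeterSystem Mmat Dinf) (w : Dinf) (S : Set Dinf) : Prop :=
  w ∈ S ∧ ∀ v ∈ S, ¬ BruhatLT cs w v

/-- The combinatorial curve neighborhood `Γ_d(u)`: the Bruhat-maximal elements
among those reachable from `u` by an increasing chain of degree `≤ d`. -/
def CurveNeighborhood (cs : CoxeterSystem Mmat Dinf) (u : Dinf) (d : ℕ × ℕ) : Set Dinf :=
  { v | Reachable cs u d v ∧ ∀ v', Reachable cs u d v' → ¬ BruhatLT cs v v' }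

section proofs

open CoxeterMatrix

private abbrev ccs : CoxeterSystem Mmat Mmat.Group := Mmat.toCoxeterSystem

private abbrev s0 : Mmat.Group := ccs.simple 0
private abbrev s1 : Mmat.Group := ccs.simple 1
private abbrev tt : Mmat.Group := s0 * s1

private lemma s0s0 : s0 * s0 = 1 := ccs.simple_mul_simple_self 0
private lemma inv_s0 : s0⁻¹ = s0 := ccs.inv_simple 0
private lemma inv_s1 : s1⁻¹ = s1 := ccs.inv_simple 1

private lemma conj_t : s0 * tt * s0⁻¹ = tt⁻¹ := by
  rw [inv_s0, mul_inv_rev, inv_s0, inv_s1]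
  calc s0 * (s0 * s1) * s0 = (s0 * s0) * (s1 * s0) := by group
  _ = s1 * s0 := by rw [s0s0, one_mul]

private lemma key (n : ℤ) : s0 * tt ^ n = tt ^ (-n) * s0 := by
  have h : (s0 * tt * s0⁻¹) ^ n = s0 * tt ^ n * s0⁻¹ := conj_zpow
  rw [conj_t, inv_zpow, ← zpow_neg, inv_s0] at h
  rw [h, mul_assoc, s0s0, mul_one]

private lemma key' (n : ℤ) : tt ^ n * s0 = s0 * tt ^ (-n) := by
  rw [key, neg_neg]

/-- The homomorphism `D∞ →* Mmat.Group`. -/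
private def fwd : Dinf →* Mmat.Group where
  toFun := fun x => match x with
    | .r k => tt ^ (toInt k)
    | .sr k => s0 * tt ^ (toInt k)
  map_one' := by
    show tt ^ (toInt 0) = 1
    norm_num [toInt]
    exact zpow_zero _
  map_mul' := by
    rintro (i | i) (j | j)
    · show tt ^ (toInt (i + j)) = tt ^ (toInt i) * tt ^ (toInt j)
      rw [← zpow_add]; rfl
    · show s0 * tt ^ (toInt (j - i)) = tt ^ (toInt i) * (s0 * tt ^ (toInt j))
      rw [← mul_assoc, key', mul_assoc, ← zpow_add,
        show toInt (j - i) = -toInt i + toInt j from by simp only [toInt]; exact sub_eq_neg_add j i]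
    · show s0 * tt ^ (toInt (i + j)) = s0 * tt ^ (toInt i) * tt ^ (toInt j)
      rw [mul_assoc, ← zpow_add]; rfl
    · show tt ^ (toInt (j - i)) = s0 * tt ^ (toInt i) * (s0 * tt ^ (toInt j))
      rw [mul_assoc, ← mul_assoc (tt ^ (toInt i)), key', mul_assoc, ← mul_assoc,
        ← mul_assoc, s0s0, one_mul, ← zpow_add,
        show toInt (j - i) = -toInt i + toInt j from by simp only [toInt]; exact sub_eq_neg_add j i]

private lemma liftable : Mmat.IsLiftable toGen := by
  intro i i'
  fin_cases i <;> fin_cases i' <;>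
    decide

/-- The homomorphism `Mmat.Group →* D∞`. -/
private def bwd : Mmat.Group →* Dinf := ccs.lift ⟨toGen, liftable⟩

private lemma bwd_simple (i : Fin 2) : bwd (ccs.simple i) = toGen i :=
  ccs.lift_apply_simple liftable i

private lemma r_one_zpow (k : ℤ) : (DihedralGroup.r 1 : Dinf) ^ k = .r k := by
  induction k using Int.induction_on with
  | zero => rfl
  | succ n ih => rw [zpow_add, zpow_one, ih]; exact DihedralGroup.r_mul_r _ _
  | pred n ih =>
      rw [sub_eq_add_neg, zpow_add, ih]
      have : (DihedralGroup.r 1 : Dinf) ^ (-1 : ℤ) = .r (-1) := by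
        rw [zpow_neg, zpow_one]; rfl
      rw [this]; exact DihedralGroup.r_mul_r _ _

private lemma bwd_fwd : bwd.comp fwd = MonoidHom.id Dinf := by
  have ht : bwd tt = DihedralGroup.r 1 := by
    rw [map_mul, bwd_simple, bwd_simple]
    show DihedralGroup.sr 0 * DihedralGroup.sr 1 = _
    rw [DihedralGroup.sr_mul_sr]
    norm_num
  ext x
  rcases x with k | k
  · show bwd (tt ^ (toInt k)) = DihedralGroup.r k
    rw [map_zpow, ht, _root_.r_one_zpow]; rfl
  · show bwd (s0 * tt ^ (toInt k)) = DihedralGroup.sr k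
    rw [map_mul, map_zpow, ht, _root_.r_one_zpow, bwd_simple]
    show DihedralGroup.sr 0 * DihedralGroup.r k = DihedralGroup.sr k
    rw [DihedralGroup.sr_mul_r, zero_add]

private lemma fwd_sr0 : fwd (DihedralGroup.sr 0) = s0 := by
  show s0 * tt ^ (toInt 0) = s0
  norm_num [toInt]
  exact zpow_zero _

private lemma fwd_sr1 : fwd (DihedralGroup.sr 1) = s1 := by
  show s0 * tt ^ (toInt 1) = s1
  rw [show (toInt 1 : ℤ) = 1 from rfl, zpow_one, ← mul_assoc, s0s0, one_mul]

private lemma fwd_bwd : fwd.comp bwd = MonoidHom.id Mmat.Group := by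
  apply ccs.ext_simple
  intro i
  simp only [MonoidHom.comp_apply, MonoidHom.id_apply, bwd_simple]
  fin_cases i
  · exact fwd_sr0
  · exact fwd_sr1

end proofs

/-- `D∞` is isomorphic to the Coxeter group of the matrix `Mmat`, via an
isomorphism sending the geometric reflections `sr 0`, `sr 1` to the two
Coxeter generators. -/
theorem stmt0 : ∃ e : Dinf ≃* Mmat.Group,
    e (sr 0) = Mmat.simple 0 ∧ e (sr 1) = Mmat.simple 1 := by
  have hs : ccs.simple = Mmat.simple := Mmat.toCoxeterSystem_simple
  refine ⟨MonoidHom.toMulEquiv fwd bwd bwd_fwd fwd_bwd, ?_, ?_⟩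
  · rw [← hs]; exact fwd_sr0
  · rw [← hs]; exact fwd_sr1
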